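/- Let G be a connected graph with feedback edge set number k ≥ 3. Then dem(G) ≤ 2k - 2. -/

import Mathlib

/-!
Root the connected graph at `x` and fix a breadth-first spanning tree, given by a parent map `p`.
A forest on `n` vertices has at most `n - 1` edges, so `G` has at most `n - 1 + fes G` edges and
at most `fes G` of them lie outside the tree. Let `M` consist of `x` and, for each non-tree edge,
its endpoint farther from `x`. Every edge is monitored by its endpoints. A tree edge `s(p v, v)`
is monitored by `x` unless `v` has a second neighbour `z` closer to `x`; then `s(z, v)` is a
non-tree edge whose farther endpoint `v` lies in `M`. Hence `dem G ≤ fes G + 1`, which is at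
most `2 fes G - 2` once `fes G ≥ 3`.
-/

open SimpleGraph

/-- `e` is monitored by vertex `x` in `G`: some vertex `y` has its distance to `x`
changed when `e` is deleted (distances in `ℕ∞`, `⊤` if disconnected). -/
def monitors {V : Type*} (G : SimpleGraph V) (x : V) (e : Sym2 V) : Prop :=
  ∃ y : V, G.edist x y ≠ (G.deleteEdges {e}).edist x y

/-- `M` is a distance-edge-monitoring set of `G`. -/
def IsDEMSet {V : Type*} (G : SimpleGraph V) (M : Set V) : Prop :=
  ∀ e ∈ G.edgeSet, ∃ x ∈ M, monitors G x e

/-- The smallest size of a distance-edge-monitoring set of `G`. -/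
noncomputable def dem (V : Type*) [Fintype V] (G : SimpleGraph V) : ℕ :=
  sInf {k | ∃ M : Finset V, M.card = k ∧ IsDEMSet G ↑M}

/-- The set `P(M, e)` of pairs `(x, y)`, `x ∈ M`, whose distance changes when `e` is deleted. -/
def pairs {V : Type*} (G : SimpleGraph V) (M : Set V) (e : Sym2 V) : Set (V × V) :=
  {p | p.1 ∈ M ∧ G.edist p.1 p.2 ≠ (G.deleteEdges {e}).edist p.1 p.2}

/-- `C` is a vertex cover of `G`. -/
def IsVC {V : Type*} (G : SimpleGraph V) (C : Set V) : Prop :=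
  ∀ e ∈ G.edgeSet, ∃ v ∈ C, v ∈ e

/-- The vertex cover number of `G`. -/
noncomputable def vcNum (V : Type*) [Fintype V] (G : SimpleGraph V) : ℕ :=
  sInf {k | ∃ C : Finset V, C.card = k ∧ IsVC G ↑C}

/-- The feedback edge set number: minimum number of edges whose deletion leaves a forest. -/
noncomputable def fes (V : Type*) [Fintype V] (G : SimpleGraph V) : ℕ :=
  sInf {k | ∃ F : Finset (Sym2 V), F.card = k ∧ (G.deleteEdges ↑F).IsAcyclic}

open Finset

namespace SimpleGraph

variable {V : Type*} {G : SimpleGraph V}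

theorem IsAcyclic.card_edgeFinset_add_one_le [Fintype V] [Nonempty V] {H : SimpleGraph V}
    [Fintype H.edgeSet] (hH : H.IsAcyclic) : #H.edgeFinset + 1 ≤ Fintype.card V := by
  classical
  obtain ⟨T, hHT, -, hT⟩ := connected_top.exists_isTree_le_of_le_of_isAcyclic le_top hH
  calc #H.edgeFinset + 1 ≤ #T.edgeFinset + 1 := by gcongr
    _ = Fintype.card V := hT.card_edgeFinset

theorem Reachable.exists_adj_dist_add_one_eq {u v : V} (h : G.Reachable u v) (hne : u ≠ v) :
    ∃ w, G.Adj w v ∧ G.dist u w + 1 = G.dist u v := by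
  obtain ⟨p, hp⟩ := h.exists_walk_length_eq_dist
  have hnil : ¬p.Nil := fun hnil => hne hnil.eq
  have hadj := p.adj_penultimate hnil
  refine ⟨p.penultimate, hadj, le_antisymm ?_ ?_⟩
  · rw [← hp, ← p.length_dropLast_add_one hnil]
    exact Nat.add_le_add_right (dist_le _) 1
  · have := hadj.reachable.dist_triangle_right u
    rwa [dist_eq_one_iff_adj.mpr hadj] at this

end SimpleGraph

section

variable {V : Type*}

theorem exists_card_eq_fes [Fintype V] (G : SimpleGraph V) :
    ∃ F : Finset (Sym2 V), F.card = fes V G ∧ (G.deleteEdges ↑F).IsAcyclic := by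
  classical
  have hne :
      {k | ∃ F : Finset (Sym2 V), F.card = k ∧ (G.deleteEdges ↑F).IsAcyclic}.Nonempty := by
    refine ⟨#G.edgeFinset, G.edgeFinset, rfl, ?_⟩
    rw [coe_edgeFinset, deleteEdges_edgeSet, sdiff_self]
    exact isAcyclic_bot
  exact Nat.sInf_mem hne

theorem card_edgeFinset_add_one_le_card_add_fes [Fintype V] [Nonempty V] (G : SimpleGraph V)
    [Fintype G.edgeSet] : #G.edgeFinset + 1 ≤ Fintype.card V + fes V G := by
  classical
  obtain ⟨F, hF, hacyc⟩ := exists_card_eq_fes G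
  have := hacyc.card_edgeFinset_add_one_le
  rw [edgeFinset_deleteEdges] at this
  have := le_card_sdiff F G.edgeFinset
  omega

theorem monitors_of_mem {G : SimpleGraph V} {e : Sym2 V} (he : e ∈ G.edgeSet) {x : V}
    (hx : x ∈ e) : monitors G x e := by
  obtain ⟨y, rfl⟩ := Sym2.mem_iff_exists.mp hx
  refine ⟨y, fun h => ?_⟩
  rw [edist_eq_one_iff_adj.mpr he, eq_comm, edist_eq_one_iff_adj] at h
  simp at h

theorem monitors_of_forall_adj_dist_add_one_eq {G : SimpleGraph V} {x u v : V}
    (hr : G.Reachable x v) (hxv : x ≠ v)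
    (huniq : ∀ z, G.Adj z v → G.dist x z + 1 = G.dist x v → z = u) :
    monitors G x s(u, v) := by
  refine ⟨v, fun h => ?_⟩
  rw [← hr.coe_dist_eq_edist, eq_comm] at h
  obtain ⟨W, hW⟩ := exists_walk_of_edist_eq_coe h
  -- the last step of this shortest walk avoiding `s(u, v)` enters `v` from a second parent
  have hnil : ¬W.Nil := fun hnil => hxv hnil.eq
  obtain ⟨hadj, hne⟩ := deleteEdges_adj.mp (W.adj_penultimate hnil)
  refine hne ?_
  rw [Set.mem_singleton_iff, huniq _ hadj (le_antisymm ?_ ?_)]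
  · rw [← hW, ← W.length_dropLast_add_one hnil,
      ← W.dropLast.length_mapLe (deleteEdges_le _)]
    exact Nat.add_le_add_right (dist_le _) 1
  · simpa [dist_eq_one_iff_adj.mpr hadj] using hadj.reachable.dist_triangle_right x

theorem Sym2.exists_mem_forall_le {α β : Type*} [LinearOrder β] (f : α → β) (e : Sym2 α) :
    ∃ a ∈ e, ∀ b ∈ e, f b ≤ f a := by
  induction e with
  | _ a b =>
    rcases le_total (f a) (f b) with h | h
    · exact ⟨b, by simp, by simpa⟩
    · exact ⟨a, by simp, by simpa⟩

theorem card_image_sym2_of_lt [DecidableEq V] {p : V → V} (d : V → ℕ) {s : Finset V}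
    (hp : ∀ v ∈ s, d (p v) < d v) : #(s.image fun v => s(p v, v)) = #s := by
  refine card_image_of_injOn fun a ha b hb hab => ?_
  rcases Sym2.eq_iff.mp hab with ⟨-, h⟩ | ⟨h₁, h₂⟩
  · exact h
  · have ha' := hp a ha
    have hb' := hp b hb
    rw [h₁] at ha'
    rw [← h₂] at hb'
    omega

theorem isDEMSet_insert_of_parent_of_farthest {G : SimpleGraph V} (hG : G.Connected)
    {x : V} {p : V → V} (hp : ∀ v ≠ x, G.Adj (p v) v ∧ G.dist x (p v) + 1 = G.dist x v)
    {M : Set V}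
    (hM : ∀ e ∈ G.edgeSet, (∀ v ≠ x, e ≠ s(p v, v)) →
      ∃ v ∈ e, v ∈ M ∧ ∀ u ∈ e, G.dist x u ≤ G.dist x v) :
    IsDEMSet G (insert x M) := by
  intro e he
  by_cases htree : ∀ v ≠ x, e ≠ s(p v, v)
  · obtain ⟨v, hve, hvM, -⟩ := hM e he htree
    exact ⟨v, Set.mem_insert_of_mem x hvM, monitors_of_mem he hve⟩
  push Not at htree
  obtain ⟨v, hvx, rfl⟩ := htree
  by_cases huniq : ∀ z, G.Adj z v → G.dist x z + 1 = G.dist x v → z = p v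
  · exact ⟨x, Set.mem_insert x M,
      monitors_of_forall_adj_dist_add_one_eq (hG.preconnected x v) (Ne.symm hvx) huniq⟩
  push Not at huniq
  obtain ⟨z, hzv, hz, hzp⟩ := huniq
  have hcross : ∀ c ≠ x, s(z, v) ≠ s(p c, c) := by
    intro c hc h
    rcases Sym2.eq_iff.mp h with ⟨h₁, rfl⟩ | ⟨rfl, rfl⟩
    · exact hzp h₁
    · have := (hp z hc).2; omega
  obtain ⟨w, hw, hwM, hwmax⟩ := hM _ hzv hcross
  obtain rfl : w = v := by
    rcases Sym2.mem_iff.mp hw with rfl | rfl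
    · have := hwmax v (Sym2.mem_mk_right _ _); omega
    · rfl
  exact ⟨w, Set.mem_insert_of_mem x hwM, monitors_of_mem he (Sym2.mem_mk_right _ _)⟩

theorem dem_le_fes_add_one [Fintype V] {G : SimpleGraph V} (hG : G.Connected) :
    dem V G ≤ fes V G + 1 := by
  classical
  have : Nonempty V := hG.nonempty
  obtain ⟨x⟩ := hG.nonempty
  choose! p hp using fun v (hv : v ≠ x) =>
    (hG.preconnected x v).exists_adj_dist_add_one_eq hv.symm
  choose far hfar_mem hfar_max using Sym2.exists_mem_forall_le (G.dist x)
  set T := (univ.erase x).image fun v => s(p v, v)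
  set M := insert x ((G.edgeFinset \ T).image far)
  have hM : IsDEMSet G M := by
    rw [coe_insert]
    refine isDEMSet_insert_of_parent_of_farthest hG hp fun e he hcross => ⟨far e, hfar_mem e,
      mem_image_of_mem far (mem_sdiff.mpr ⟨mem_edgeFinset.mpr he, ?_⟩), hfar_max e⟩
    simp only [T, mem_image, mem_erase]
    rintro ⟨v, ⟨hv, -⟩, rfl⟩
    exact hcross v hv rfl
  have hT : #T = Fintype.card V - 1 := by
    rw [card_image_sym2_of_lt (G.dist x) fun v hv => ?_, card_erase_of_mem (mem_univ x), card_univ]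
    have := (hp v (ne_of_mem_erase hv)).2
    omega
  have hTE : T ⊆ G.edgeFinset := by
    simp only [T, image_subset_iff, mem_erase, mem_edgeFinset]
    exact fun v ⟨hv, _⟩ => (hp v hv).1
  have hE := card_edgeFinset_add_one_le_card_add_fes G
  calc dem V G ≤ #M := Nat.sInf_le ⟨M, rfl, hM⟩
    _ ≤ #(G.edgeFinset \ T) + 1 := (card_insert_le _ _).trans (by gcongr; exact card_image_le)
    _ ≤ fes V G + 1 := by rw [card_sdiff_of_subset hTE]; omega

end

theorem stmt16 {V : Type*} [Fintype V] (G : SimpleGraph V) (hG : G.Connected)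
    (k : ℕ) (hk : fes V G = k) (hk3 : 3 ≤ k) :
    dem V G ≤ 2 * k - 2 := by
  have := dem_le_fes_add_one hG
  omega
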